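/- Let d ≥ 1 and let B_j = (u_{1,j}, …, u_{d,j}), j = 1, …, d+1, be mutually unbiased bases of ℂ^d. Then the vectors u_{i,j} ⊗ ū_{i,j} − (1/√d)·φ⁰, ranging over all 1 ≤ i ≤ d and 1 ≤ j ≤ d+1, span the orthogonal complement of φ⁰ in ℂ^d ⊗ ℂ^d. -/

import Mathlib

/-!
Under vectorisation `centeredTens a` is the traceless operator `|a⟩⟨a| - I/d`, and for unit
vectors `⟪centeredTens a, centeredTens b⟫ = |⟪a, b⟫|² - 1/d`. For mutually unbiased bases the
Gram matrix of these vectors is thus block diagonal, one block `I - J/d` per basis. Dropping one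
vector from each basis leaves blocks `I - J/d` of size `d - 1`, which are invertible, so
`(d + 1)(d - 1) = d² - 1` of the vectors are linearly independent. All of them lie in `φ⁰ᗮ`,
which has dimension `d² - 1`.
-/

open scoped BigOperators ComplexInnerProductSpace
open Matrix MeasureTheory

noncomputable section

/-- `ℂ^d` with the standard Hermitian inner product. -/
abbrev V (d : ℕ) : Type := EuclideanSpace ℂ (Fin d)

/-- `ℂ^d ⊗ ℂ^d`, identified with functions on `Fin d × Fin d`. -/
abbrev V2 (d : ℕ) : Type := EuclideanSpace ℂ (Fin d × Fin d)

/-- operators on `ℂ^d ⊗ ℂ^d`, as matrices. -/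
abbrev Op2 (d : ℕ) : Type := Matrix (Fin d × Fin d) (Fin d × Fin d) ℂ

/-- tensor (Kronecker) product of vectors. -/
def tens {d : ℕ} (u v : V d) : V2 d := WithLp.toLp 2 (fun p : Fin d × Fin d => u p.1 * v p.2)

/-- entrywise complex conjugate `ū` of a vector. -/
def cvec {d : ℕ} (u : V d) : V d := WithLp.toLp 2 (fun k => starRingEnd ℂ (u k))

/-- the maximally entangled state `φ⁰ = (1/√d) Σ_k e_k ⊗ e_k`. -/
def phi0 (d : ℕ) : V2 d := WithLp.toLp 2 (fun p : Fin d × Fin d => if p.1 = p.2 then ((Real.sqrt d : ℂ))⁻¹ else 0)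

/-- the rank-one operator `|w⟩⟨w|`. -/
def outer {d : ℕ} (w : V2 d) : Op2 d := Matrix.of fun p q => w p * starRingEnd ℂ (w q)

/-- `T_inv = |φ⁰⟩⟨φ⁰| + (1/(d+1))(I - |φ⁰⟩⟨φ⁰|)`. -/
def Tinv (d : ℕ) : Op2 d := outer (phi0 d) + (1 / ((d : ℂ) + 1)) • (1 - outer (phi0 d))


/-- `u j` is the `j`-th orthonormal basis (`j = 1, …, d+1`); the bases are
mutually unbiased: `|⟨u_{i,j}, u_{i',j'}⟩|² = 1/d` whenever `j ≠ j'`. -/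
def IsMUB {d : ℕ} (u : Fin (d + 1) → Fin d → V d) : Prop :=
  (∀ j, Orthonormal ℂ (u j)) ∧
    ∀ j j' i i', j ≠ j' → ‖⟪u j i, u j' i'⟫‖ ^ 2 = 1 / d

lemma inner_tens {d : ℕ} (a c b e : V d) :
    ⟪tens a c, tens b e⟫ = ⟪a, b⟫ * ⟪c, e⟫ := by
  simp only [PiLp.inner_apply, RCLike.inner_apply, tens, Fintype.sum_prod_type, map_mul,
    Finset.sum_mul_sum]
  exact Finset.sum_congr rfl fun _ _ => Finset.sum_congr rfl fun _ _ => by ring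

lemma inner_cvec {d : ℕ} (a b : V d) : ⟪cvec a, cvec b⟫ = ⟪b, a⟫ := by
  simp only [PiLp.inner_apply, RCLike.inner_apply, cvec, Complex.conj_conj]
  exact Finset.sum_congr rfl fun _ _ => mul_comm _ _

lemma inner_phi0_tens_cvec {d : ℕ} (a : V d) :
    ⟪phi0 d, tens a (cvec a)⟫ = ((Real.sqrt d : ℂ))⁻¹ * ⟪a, a⟫ := by
  simp only [PiLp.inner_apply, RCLike.inner_apply, tens, cvec, phi0, PiLp.toLp_apply,
    Fintype.sum_prod_type, Finset.mul_sum, apply_ite (starRingEnd ℂ), map_zero, mul_ite, mul_zero,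
    Finset.sum_ite_eq, Finset.mem_univ, if_true, map_inv₀, Complex.conj_ofReal]
  exact Finset.sum_congr rfl fun _ _ => by ring

lemma inv_sqrt_mul_inv_sqrt (d : ℕ) :
    ((Real.sqrt d : ℂ))⁻¹ * ((Real.sqrt d : ℂ))⁻¹ = ((d : ℂ))⁻¹ := by
  rw [← mul_inv, ← Complex.ofReal_mul, Real.mul_self_sqrt d.cast_nonneg, Complex.ofReal_natCast]

lemma inner_phi0_self (d : ℕ) [NeZero d] : ⟪phi0 d, phi0 d⟫ = (1 : ℂ) := by
  simp only [PiLp.inner_apply, RCLike.inner_apply, phi0, Fintype.sum_prod_type,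
    apply_ite (starRingEnd ℂ), map_zero, mul_ite, ite_mul, mul_zero, zero_mul, Finset.sum_ite_eq,
    Finset.mem_univ, if_true, map_inv₀, Complex.conj_ofReal, inv_sqrt_mul_inv_sqrt,
    Finset.sum_const, Finset.card_univ, Fintype.card_fin, nsmul_eq_mul]
  exact mul_inv_cancel₀ (NeZero.ne _)

lemma neZero_of_norm_eq_one {d : ℕ} {a : V d} (ha : ‖a‖ = 1) : NeZero d :=
  ⟨by rintro rfl; simp [Subsingleton.elim a 0] at ha⟩

def centeredTens {d : ℕ} (a : V d) : V2 d := tens a (cvec a) - ((Real.sqrt d : ℂ))⁻¹ • phi0 d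

lemma inner_phi0_centeredTens {d : ℕ} {a : V d} (ha : ‖a‖ = 1) :
    ⟪phi0 d, centeredTens a⟫ = 0 := by
  have := neZero_of_norm_eq_one ha
  rw [centeredTens, inner_sub_right, inner_smul_right, inner_phi0_tens_cvec,
    inner_self_eq_norm_sq_to_K, ha, inner_phi0_self]
  simp

lemma inner_centeredTens {d : ℕ} {a b : V d} (ha : ‖a‖ = 1) (hb : ‖b‖ = 1) :
    ⟪centeredTens a, centeredTens b⟫ = (‖⟪a, b⟫‖ ^ 2 : ℂ) - ((d : ℂ))⁻¹ := by
  have := neZero_of_norm_eq_one ha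
  have hphi_b : ⟪phi0 d, tens b (cvec b)⟫ = ((Real.sqrt d : ℂ))⁻¹ := by
    rw [inner_phi0_tens_cvec, inner_self_eq_norm_sq_to_K, hb]; simp
  have ha_phi : ⟪tens a (cvec a), phi0 d⟫ = ((Real.sqrt d : ℂ))⁻¹ := by
    rw [← inner_conj_symm, inner_phi0_tens_cvec, inner_self_eq_norm_sq_to_K, ha]; simp
  have hab : ⟪tens a (cvec a), tens b (cvec b)⟫ = (‖⟪a, b⟫‖ ^ 2 : ℂ) := by
    rw [inner_tens, inner_cvec, ← inner_conj_symm b a, RCLike.mul_conj]; rfl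
  simp only [centeredTens, inner_sub_left, inner_sub_right, inner_smul_left, inner_smul_right,
    hphi_b, ha_phi, hab, inner_phi0_self, map_inv₀, Complex.conj_ofReal, mul_one,
    inv_sqrt_mul_inv_sqrt]
  ring

lemma linearIndependent_of_inner_eq_ite {𝕜 E ι κ : Type*} [RCLike 𝕜] [NormedAddCommGroup E]
    [InnerProductSpace 𝕜 E] [Fintype ι] [Fintype κ] [DecidableEq ι] [DecidableEq κ] {c : 𝕜}
    (hc : c * Fintype.card κ ≠ 1) {f : ι × κ → E}
    (hf : ∀ j j' i i', inner 𝕜 (f (j, i)) (f (j', i')) =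
      if j = j' then (if i = i' then 1 else 0) - c else 0) :
    LinearIndependent 𝕜 f := by
  rw [Fintype.linearIndependent_iff]
  intro g hg
  have hg_eq : ∀ j i, g (j, i) = c * ∑ i', g (j, i') := by
    intro j i
    have h : ∑ i', g (j, i') * ((if i = i' then 1 else 0) - c) = 0 := by
      simpa [inner_sum, inner_smul_right, Fintype.sum_prod_type, hf] using
        congrArg (inner 𝕜 (f (j, i))) hg
    simp only [mul_sub, mul_ite, mul_one, mul_zero, Finset.sum_sub_distrib, Finset.sum_ite_eq,
      Finset.mem_univ, if_true, ← Finset.sum_mul] at h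
    linear_combination h
  have hsum : ∀ j, ∑ i, g (j, i) = 0 := by
    intro j
    have h : ∑ i, g (j, i) = ∑ _i : κ, c * ∑ i', g (j, i') :=
      Finset.sum_congr rfl fun i _ => hg_eq j i
    rw [Finset.sum_const, Finset.card_univ, nsmul_eq_mul] at h
    have : (1 - c * Fintype.card κ) * ∑ i, g (j, i) = 0 := by linear_combination h
    exact (mul_eq_zero.mp this).resolve_left (sub_ne_zero.mpr hc.symm)
  intro ⟨j, i⟩
  rw [hg_eq, hsum, mul_zero]

lemma inner_centeredTens_of_isMUB {d : ℕ} {u : Fin (d + 1) → Fin d → V d} (hu : IsMUB u)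
    (j j' : Fin (d + 1)) (i i' : Fin d) :
    ⟪centeredTens (u j i), centeredTens (u j' i')⟫ =
      if j = j' then (if i = i' then 1 else 0) - ((d : ℂ))⁻¹ else 0 := by
  rw [inner_centeredTens ((hu.1 j).1 i) ((hu.1 j').1 i')]
  split_ifs with hj hi
  · subst hj hi; simp [(hu.1 j).1 i]
  · subst hj; simp [orthonormal_iff_ite.mp (hu.1 j) i i', hi]
  · rw [← Complex.ofReal_pow, hu.2 j j' i i' hj]; simp

lemma linearIndependent_centeredTens_of_isMUB {d : ℕ} [NeZero d]
    {u : Fin (d + 1) → Fin d → V d} (hu : IsMUB u) :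
    LinearIndependent ℂ fun q : Fin (d + 1) × {i : Fin d // i ≠ 0} =>
      centeredTens (u q.1 q.2) := by
  refine linearIndependent_of_inner_eq_ite (c := ((d : ℂ))⁻¹) ?_ fun j j' i i' => ?_
  · have hcard : Fintype.card {i : Fin d // i ≠ 0} = d - 1 := by simp
    rw [hcard, Ne, inv_mul_eq_one₀ (NeZero.ne _), Nat.cast_inj]
    have := NeZero.pos d
    omega
  · simp [inner_centeredTens_of_isMUB hu, Subtype.ext_iff]

lemma finrank_orthogonal_phi0 (d : ℕ) [NeZero d] :
    Module.finrank ℂ (ℂ ∙ phi0 d)ᗮ = d * d - 1 := by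
  have hphi : phi0 d ≠ 0 := fun h => by simpa [h] using inner_phi0_self d
  refine Submodule.finrank_add_finrank_orthogonal' ?_
  rw [finrank_span_singleton hphi, finrank_euclideanSpace, Fintype.card_prod, Fintype.card_fin]
  have := NeZero.pos d
  have := Nat.mul_pos this this
  omega

/-- For mutually unbiased bases, the vectors `u_{i,j} ⊗ ū_{i,j} - (1/√d) φ⁰`
span the orthogonal complement of `φ⁰`. -/
theorem stmt7 (d : ℕ) (hd : 1 ≤ d) (u : Fin (d + 1) → Fin d → V d) (hu : IsMUB u) :
    Submodule.span ℂ
      (Set.range fun p : Fin (d + 1) × Fin d =>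
        tens (u p.1 p.2) (cvec (u p.1 p.2)) - ((Real.sqrt d : ℂ))⁻¹ • phi0 d)
      = (ℂ ∙ phi0 d)ᗮ := by
  have : NeZero d := ⟨by omega⟩
  change Submodule.span ℂ (Set.range fun p : Fin (d + 1) × Fin d => centeredTens (u p.1 p.2)) = _
  refine Submodule.eq_of_le_of_finrank_le ?_ ?_
  · rw [Submodule.span_le]
    rintro _ ⟨p, rfl⟩
    exact Submodule.mem_orthogonal_singleton_iff_inner_right.mpr
      (inner_phi0_centeredTens ((hu.1 p.1).1 p.2))
  · calc Module.finrank ℂ (ℂ ∙ phi0 d)ᗮ = (d + 1) * (d - 1) := by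
          rw [finrank_orthogonal_phi0, ← Nat.mul_self_sub_mul_self_eq, one_mul]
      _ = Module.finrank ℂ (Submodule.span ℂ
            (Set.range fun q : Fin (d + 1) × {i : Fin d // i ≠ 0} =>
              centeredTens (u q.1 q.2))) := by
          rw [finrank_span_eq_card (linearIndependent_centeredTens_of_isMUB hu)]
          simp
      _ ≤ _ := Submodule.finrank_mono <| Submodule.span_mono <| by
          rintro _ ⟨q, rfl⟩
          exact ⟨(q.1, q.2), rfl⟩
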